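/- arXiv:1701.06257 — 5 statements merged into one kernel-verified Lean document; each statement's English description precedes it below -/
import Mathlib

section
/- Let f : ℤ⁺ → ℂ be an arbitrary arithmetic function. Then for every integer n ≥ 1, g_f(n+1) = Σ_{b∈{1,−1}} Σ_{k=1}^{⌊(√(24n+1)−b)/6⌋} (−1)^{k+1} g_f(n+1−k(3k+b)/2) + a_f(n+1), where the inner sum ranges exactly over the integers k ≥ 1 with k(3k+b)/2 ≤ n. -/
/-!
STATEMENT 0: For an arbitrary arithmetic function `f : ℤ⁺ → ℂ` (modeled as
`f : ℕ → ℂ`, only values at positive arguments being used), with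
`g_f(m) = ∑_{d ∣ m} f(d)` for `m ≥ 1` and `g_f(m) = 0` for `m ≤ 0`, we have for all `n ≥ 1`:
`g_f(n+1) = ∑_{b = ±1} ∑_{k ≥ 1, k(3k+b)/2 ≤ n} (-1)^(k+1) g_f(n+1-k(3k+b)/2) + a_f(n+1)`.
-/

/-- `g_f(m) = ∑_{d ∣ m} f(d)` for `m ≥ 1`, and `0` for `m ≤ 0`. -/
noncomputable def gf (f : ℕ → ℂ) (m : ℤ) : ℂ :=
  if 1 ≤ m then ∑ d ∈ (m.toNat).divisors, f d else 0

/-- `c(m) = (-1)^k` when `m = k(3k+1)/2` or `m = k(3k-1)/2` for some integer `k ≥ 0`,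
and `c(m) = 0` otherwise. (Each such `m` determines a unique exponent sign `(-1)^k`.) -/
def pentCoeff (m : ℤ) : ℤ :=
  ∑ k ∈ Finset.range (m.toNat + 1),
    ((if 2 * m = (k : ℤ) * (3 * k + 1) then (-1 : ℤ) ^ k else 0) +
      (if 2 * m = (k : ℤ) * (3 * k - 1) ∧ 1 ≤ k then (-1 : ℤ) ^ k else 0))

/-- `a_{n,i} := ∑_{s=0}^{⌊n/i⌋ - 1} c(n - (s+1) i)`. -/
def aEnt (n i : ℕ) : ℤ :=
  ∑ s ∈ Finset.range (n / i), pentCoeff ((n : ℤ) - (s + 1) * i)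

/-- `a_f(n) := ∑_{i=1}^n f(i) a_{n,i}`. -/
noncomputable def af (f : ℕ → ℂ) (n : ℕ) : ℂ :=
  ∑ i ∈ Finset.Icc 1 n, f i * (aEnt n i : ℂ)



open Finset

lemma two_dvd_pent1 (k : ℕ) : 2 ∣ k * (3 * k + 1) := by
  rcases Nat.even_or_odd k with ⟨t, rfl⟩ | ⟨t, rfl⟩
  · exact ⟨t * (3 * (t + t) + 1), by ring⟩
  · exact ⟨(2 * t + 1) * (3 * t + 2), by ring⟩

lemma two_dvd_pent2 (k : ℕ) : 2 ∣ k * (3 * k - 1) := by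
  rcases k with _ | k
  · simp
  · have h : 3 * (k + 1) - 1 = 3 * k + 2 := by omega
    rw [h]
    rcases Nat.even_or_odd k with ⟨t, rfl⟩ | ⟨t, rfl⟩
    · exact ⟨(t + t + 1) * (3 * t + 1), by ring⟩
    · exact ⟨(t + 1) * (3 * (2 * t + 1) + 2), by ring⟩


lemma aEnt_eq (N i : ℕ) (hi : 1 ≤ i) :
    aEnt N i = ∑ t ∈ Icc 1 N, if i * t ≤ N then pentCoeff ((N : ℤ) - (i * t : ℕ)) else 0 := by
  rw [← Finset.sum_filter]
  have hset : (Icc 1 N).filter (fun t => i * t ≤ N) = Icc 1 (N / i) := by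
    ext t
    simp only [Finset.mem_filter, Finset.mem_Icc]
    rw [Nat.le_div_iff_mul_le hi, mul_comm]
    constructor
    · rintro ⟨⟨h1, _⟩, h3⟩; exact ⟨h1, h3⟩
    · rintro ⟨h1, h2⟩
      refine ⟨⟨h1, ?_⟩, h2⟩
      calc t = t * 1 := (mul_one t).symm
        _ ≤ t * i := Nat.mul_le_mul_left t hi
        _ ≤ N := h2
  rw [hset, ← Finset.Ico_add_one_right_eq_Icc, Finset.sum_Ico_eq_sum_range]
  unfold aEnt
  apply Finset.sum_congr rfl
  intro s _
  congr 1
  push_cast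
  ring

lemma divisor_sum_eq (f : ℕ → ℂ) (N j : ℕ) (h1 : 1 ≤ j) (h2 : j ≤ N) :
    (∑ d ∈ j.divisors, f d) =
      ∑ i ∈ Icc 1 N, ∑ t ∈ Icc 1 N, if i * t = j then f i else 0 := by
  have key : ∀ i ∈ Icc 1 N, (∑ t ∈ Icc 1 N, if i * t = j then f i else 0)
      = if i ∣ j then f i else 0 := by
    intro i hi
    rw [Finset.mem_Icc] at hi
    by_cases hd : i ∣ j
    · obtain ⟨u, rfl⟩ := hd
      have hi0 : 0 < i := hi.1
      have hu1 : 1 ≤ u := by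
        rcases Nat.eq_zero_or_pos u with h | h
        · subst h; simp at h1
        · exact h
      have huN : u ≤ N := le_trans (Nat.le_mul_of_pos_left u hi0) h2
      rw [if_pos ⟨u, rfl⟩]
      have : ∀ t ∈ Icc 1 N, (if i * t = i * u then f i else 0) = if t = u then f i else 0 := by
        intro t _
        congr 1
        simp [Nat.mul_left_cancel_iff hi0]
      rw [Finset.sum_congr rfl this, Finset.sum_ite_eq' (Icc 1 N) u fun _ => f i,
        if_pos (Finset.mem_Icc.2 ⟨hu1, huN⟩)]
    · rw [if_neg hd]
      apply Finset.sum_eq_zero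
      intro t _
      rw [if_neg]
      intro h
      exact hd ⟨t, h.symm⟩
  rw [Finset.sum_congr rfl key, ← Finset.sum_filter]
  apply Finset.sum_congr _ (fun _ _ => rfl)
  ext d
  simp only [Nat.mem_divisors, Finset.mem_filter, Finset.mem_Icc]
  constructor
  · rintro ⟨hd, _⟩
    exact ⟨⟨Nat.pos_of_dvd_of_pos hd h1, le_trans (Nat.le_of_dvd h1 hd) h2⟩, hd⟩
  · rintro ⟨_, hd⟩
    exact ⟨hd, by omega⟩

lemma af_eq (f : ℕ → ℂ) (N : ℕ) :
    af f N = ∑ j ∈ Icc 1 N, (pentCoeff ((N : ℤ) - j) : ℂ) * ∑ d ∈ j.divisors, f d := by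
  have L : af f N = ∑ i ∈ Icc 1 N, ∑ t ∈ Icc 1 N,
      if i * t ≤ N then f i * (pentCoeff ((N : ℤ) - (i * t : ℕ)) : ℂ) else 0 := by
    unfold af
    apply Finset.sum_congr rfl
    intro i hi
    rw [aEnt_eq N i (Finset.mem_Icc.1 hi).1]
    push_cast
    rw [Finset.mul_sum]
    apply Finset.sum_congr rfl
    intro t _
    split <;> simp
  rw [L]
  have R : ∀ j ∈ Icc 1 N, (pentCoeff ((N : ℤ) - j) : ℂ) * ∑ d ∈ j.divisors, f d
      = ∑ i ∈ Icc 1 N, ∑ t ∈ Icc 1 N,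
        if i * t = j then f i * (pentCoeff ((N : ℤ) - (i * t : ℕ)) : ℂ) else 0 := by
    intro j hj
    obtain ⟨hj1, hj2⟩ := Finset.mem_Icc.1 hj
    rw [divisor_sum_eq f N j hj1 hj2, Finset.mul_sum]
    apply Finset.sum_congr rfl
    intro i _
    rw [Finset.mul_sum]
    apply Finset.sum_congr rfl
    intro t _
    by_cases h : i * t = j
    · rw [if_pos h, if_pos h, h]; ring
    · rw [if_neg h, if_neg h, mul_zero]
  calc ∑ i ∈ Icc 1 N, ∑ t ∈ Icc 1 N,
        (if i * t ≤ N then f i * (pentCoeff ((N : ℤ) - (i * t : ℕ)) : ℂ) else 0)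
      = ∑ i ∈ Icc 1 N, ∑ t ∈ Icc 1 N, ∑ j ∈ Icc 1 N,
        (if i * t = j then f i * (pentCoeff ((N : ℤ) - (i * t : ℕ)) : ℂ) else 0) := by
        apply Finset.sum_congr rfl
        intro i hi
        apply Finset.sum_congr rfl
        intro t ht
        rw [Finset.sum_ite_eq (Icc 1 N) (i * t)
          (fun _ => f i * (pentCoeff ((N : ℤ) - (i * t : ℕ)) : ℂ))]
        congr 1
        simp only [Finset.mem_Icc, eq_iff_iff]
        obtain ⟨hi1, _⟩ := Finset.mem_Icc.1 hi
        obtain ⟨ht1, _⟩ := Finset.mem_Icc.1 ht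
        constructor
        · exact fun h => ⟨Nat.one_le_iff_ne_zero.2 (by positivity), h⟩
        · exact fun h => h.2
    _ = ∑ i ∈ Icc 1 N, ∑ j ∈ Icc 1 N, ∑ t ∈ Icc 1 N,
        (if i * t = j then f i * (pentCoeff ((N : ℤ) - (i * t : ℕ)) : ℂ) else 0) :=
        Finset.sum_congr rfl fun i _ => Finset.sum_comm
    _ = ∑ j ∈ Icc 1 N, ∑ i ∈ Icc 1 N, ∑ t ∈ Icc 1 N,
        (if i * t = j then f i * (pentCoeff ((N : ℤ) - (i * t : ℕ)) : ℂ) else 0) :=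
        Finset.sum_comm
    _ = ∑ j ∈ Icc 1 N, (pentCoeff ((N : ℤ) - j) : ℂ) * ∑ d ∈ j.divisors, f d :=
        (Finset.sum_congr rfl R).symm

lemma pentCoeff_zero : pentCoeff 0 = 1 := by simp [pentCoeff]

lemma split_eq (N : ℕ) (hN : 1 ≤ N) (Y : ℕ → ℂ) :
    ∑ j ∈ Icc 1 N, (pentCoeff ((N : ℤ) - j) : ℂ) * Y j =
      Y N + ∑ m ∈ Icc 1 (N - 1), (pentCoeff (m : ℤ) : ℂ) * Y (N - m) := by
  set h : ℕ → ℂ := fun j => (pentCoeff ((N : ℤ) - j) : ℂ) * Y j with hh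
  have e1 : ∑ j ∈ Icc 1 N, h j = ∑ s ∈ Finset.range N, h (1 + s) := by
    rw [← Finset.Ico_add_one_right_eq_Icc, Finset.sum_Ico_eq_sum_range]
    norm_num
  have e2 : ∑ s ∈ Finset.range N, h (1 + s) = ∑ s ∈ Finset.range N, h (N - s) := by
    rw [← Finset.sum_range_reflect (fun s => h (N - s)) N]
    apply Finset.sum_congr rfl
    intro s hs
    rw [Finset.mem_range] at hs
    congr 1
    omega
  obtain ⟨M, rfl⟩ : ∃ M, N = M + 1 := ⟨N - 1, by omega⟩
  have e3 : ∑ s ∈ Finset.range (M + 1), h (M + 1 - s) =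
      (∑ i ∈ Finset.range M, h (M + 1 - (i + 1))) + h (M + 1) := by
    exact Finset.sum_range_succ' (fun s => h (M + 1 - s)) M
  have e4 : ∑ m ∈ Icc 1 (M + 1 - 1), (pentCoeff (m : ℤ) : ℂ) * Y (M + 1 - m) =
      ∑ i ∈ Finset.range M, h (M + 1 - (i + 1)) := by
    simp only [Nat.add_sub_cancel]
    rw [← Finset.Ico_add_one_right_eq_Icc, Finset.sum_Ico_eq_sum_range]
    have hM : M + 1 - 1 = M := by omega
    rw [hM]
    apply Finset.sum_congr rfl
    intro i hi
    rw [Finset.mem_range] at hi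
    rw [hh]
    simp only []
    have harg : ((M : ℤ) + 1) - ((M + 1 - (i + 1) : ℕ) : ℤ) = ((1 + i : ℕ) : ℤ) := by
      omega
    rw [show ((M:ℕ) + 1 : ℕ) = M + 1 from rfl]
    push_cast at harg ⊢
    rw [harg]
    congr 2
    omega
  have hend : h (M + 1) = Y (M + 1) := by
    rw [hh]
    simp only [sub_self, pentCoeff_zero]
    norm_num
  rw [e1, e2, e3, e4, hend, add_comm]

lemma collapse (n q : ℕ) (hq1 : 1 ≤ q) (P : ℤ) (hq : P = 2 * q) (C : ℂ) (Y : ℤ → ℂ) :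
    (∑ m ∈ Icc 1 n, if 2 * (m : ℤ) = P then C * Y (m : ℤ) else 0)
      = if P ≤ 2 * n then C * Y (P / 2) else 0 := by
  subst hq
  have hdiv : (2 * (q : ℤ)) / 2 = (q : ℤ) := by omega
  rw [hdiv]
  have step : ∀ m ∈ Icc 1 n, (if 2 * (m : ℤ) = 2 * q then C * Y (m : ℤ) else 0)
      = if m = q then C * Y (m : ℤ) else 0 := by
    intro m _
    congr 1
    simp only [eq_iff_iff]
    omega
  rw [Finset.sum_congr rfl step, Finset.sum_ite_eq' (Icc 1 n) q (fun m => C * Y (m : ℤ))]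
  congr 1
  simp only [Finset.mem_Icc, eq_iff_iff]
  omega

lemma pent_sum_eq (n : ℕ) (Y : ℤ → ℂ) :
    ∑ m ∈ Icc 1 n, (pentCoeff (m : ℤ) : ℂ) * Y (m : ℤ) =
      ∑ b ∈ ({1, -1} : Finset ℤ), ∑ k ∈ Icc 1 n,
        if (k : ℤ) * (3 * k + b) ≤ 2 * n then
          (-1 : ℂ) ^ k * Y ((k : ℤ) * (3 * k + b) / 2)
        else 0 := by
  have expand : ∀ m ∈ Icc 1 n, (pentCoeff (m : ℤ) : ℂ) * Y (m : ℤ) =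
      ∑ k ∈ Finset.range (n + 1),
        ((if 2 * (m : ℤ) = (k : ℤ) * (3 * k + 1) then (-1 : ℂ) ^ k * Y (m : ℤ) else 0) +
         (if 2 * (m : ℤ) = (k : ℤ) * (3 * k - 1) ∧ 1 ≤ k then (-1 : ℂ) ^ k * Y (m : ℤ) else 0)) := by
    intro m hm
    obtain ⟨hm1, hm2⟩ := Finset.mem_Icc.1 hm
    unfold pentCoeff
    rw [Int.toNat_natCast]
    push_cast
    rw [Finset.sum_mul]
    have base : ∀ k ∈ Finset.range (m + 1),
        (((if 2 * (m : ℤ) = (k : ℤ) * (3 * k + 1) then ((-1 : ℂ)) ^ k else 0) +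
          (if 2 * (m : ℤ) = (k : ℤ) * (3 * k - 1) ∧ 1 ≤ k then ((-1 : ℂ)) ^ k else 0)) * Y (m : ℤ))
        = ((if 2 * (m : ℤ) = (k : ℤ) * (3 * k + 1) then (-1 : ℂ) ^ k * Y (m : ℤ) else 0) +
           (if 2 * (m : ℤ) = (k : ℤ) * (3 * k - 1) ∧ 1 ≤ k then (-1 : ℂ) ^ k * Y (m : ℤ) else 0)) := by
      intro k _
      rw [add_mul]
      congr 1 <;> (split <;> simp)
    rw [Finset.sum_congr rfl base]
    apply Finset.sum_subset
    · exact Finset.range_subset_range.2 (by omega)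
    · intro k hk hk2
      rw [Finset.mem_range] at hk hk2
      have hkm : (m : ℤ) < k := by exact_mod_cast (by omega : m < k)
      have hk1 : (1 : ℤ) ≤ k := by exact_mod_cast (by omega : 1 ≤ k)
      rw [if_neg, if_neg]
      · ring
      · rintro ⟨h, -⟩
        nlinarith
      · intro h
        nlinarith
  rw [Finset.sum_congr rfl expand, Finset.sum_comm,
    Finset.sum_pair (by norm_num : (1 : ℤ) ≠ -1)]
  have inner : ∀ k ∈ Finset.range (n + 1),
      (∑ x ∈ Icc 1 n,
        ((if 2 * (x : ℤ) = (k : ℤ) * (3 * k + 1) then (-1 : ℂ) ^ k * Y (x : ℤ) else 0) +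
         (if 2 * (x : ℤ) = (k : ℤ) * (3 * k - 1) ∧ 1 ≤ k then (-1 : ℂ) ^ k * Y (x : ℤ) else 0)))
      = (∑ x ∈ Icc 1 n, if 2 * (x : ℤ) = (k : ℤ) * (3 * k + 1) then (-1 : ℂ) ^ k * Y (x : ℤ) else 0)
        + (∑ x ∈ Icc 1 n, if 2 * (x : ℤ) = (k : ℤ) * (3 * k - 1) ∧ 1 ≤ k then (-1 : ℂ) ^ k * Y (x : ℤ) else 0) :=
    fun k _ => Finset.sum_add_distrib
  rw [Finset.sum_congr rfl inner, Finset.sum_add_distrib]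
  have hsub : Icc 1 n ⊆ Finset.range (n + 1) := by
    intro x hx
    rw [Finset.mem_Icc] at hx
    rw [Finset.mem_range]
    omega
  congr 1
  · -- b = 1 part
    rw [← Finset.sum_subset hsub (by
      intro k hk hk2
      rw [Finset.mem_range] at hk
      rw [Finset.mem_Icc] at hk2
      have hk0 : k = 0 := by omega
      subst hk0
      apply Finset.sum_eq_zero
      intro x hx
      rw [Finset.mem_Icc] at hx
      rw [if_neg]
      push_cast
      have : (1 : ℤ) ≤ (x : ℤ) := by exact_mod_cast hx.1
      intro h
      simp at h
      omega)]
    apply Finset.sum_congr rfl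
    intro k hk
    obtain ⟨hk1, hkn⟩ := Finset.mem_Icc.1 hk
    obtain ⟨q, hq⟩ := two_dvd_pent1 k
    have hq1 : 1 ≤ q := by nlinarith
    have hP : (k : ℤ) * (3 * k + 1) = 2 * q := by exact_mod_cast hq
    exact collapse n q hq1 _ hP ((-1 : ℂ) ^ k) Y
  · -- b = -1 part
    rw [← Finset.sum_subset hsub (by
      intro k hk hk2
      rw [Finset.mem_range] at hk
      rw [Finset.mem_Icc] at hk2
      have hk0 : k = 0 := by omega
      subst hk0
      apply Finset.sum_eq_zero
      intro x hx
      rw [if_neg]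
      rintro ⟨-, h⟩
      omega)]
    apply Finset.sum_congr rfl
    intro k hk
    obtain ⟨hk1, hkn⟩ := Finset.mem_Icc.1 hk
    obtain ⟨q, hq⟩ := two_dvd_pent2 k
    have h2 : 2 ≤ 3 * k - 1 := by omega
    have hq1 : 1 ≤ q := by nlinarith
    have hP : (k : ℤ) * (3 * k + -1) = 2 * q := by
      have hq' : (k : ℤ) * (3 * (k : ℤ) - 1) = 2 * (q : ℤ) := by
        have h := congrArg (fun x : ℕ => (x : ℤ)) hq
        push_cast [Nat.cast_sub (by omega : 1 ≤ 3 * k)] at h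
        exact h
      linear_combination hq'
    have drop : ∀ x ∈ Icc 1 n,
        (if 2 * (x : ℤ) = (k : ℤ) * (3 * k - 1) ∧ 1 ≤ k then (-1 : ℂ) ^ k * Y (x : ℤ) else 0)
        = if 2 * (x : ℤ) = (k : ℤ) * (3 * k + -1) then (-1 : ℂ) ^ k * Y (x : ℤ) else 0 := by
      intro x _
      congr 1
      simp only [eq_iff_iff]
      constructor
      · rintro ⟨h, -⟩; linarith
      · intro h; exact ⟨by linarith, hk1⟩
    rw [Finset.sum_congr rfl drop]
    exact collapse n q hq1 _ hP ((-1 : ℂ) ^ k) Y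


lemma gf_natCast (f : ℕ → ℂ) (j : ℕ) : gf f (j : ℤ) = ∑ d ∈ j.divisors, f d := by
  unfold gf
  rcases Nat.eq_zero_or_pos j with rfl | hj
  · simp
  · rw [if_pos (by exact_mod_cast hj), Int.toNat_natCast]

theorem statement0 (f : ℕ → ℂ) (n : ℕ) (hn : 1 ≤ n) :
    gf f ((n : ℤ) + 1) =
      (∑ b ∈ ({1, -1} : Finset ℤ), ∑ k ∈ Finset.Icc 1 n,
        if (k : ℤ) * (3 * k + b) ≤ 2 * n then
          (-1 : ℂ) ^ (k + 1) * gf f ((n : ℤ) + 1 - (k : ℤ) * (3 * k + b) / 2)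
        else 0) + af f (n + 1) := by
  set Y : ℤ → ℂ := fun z => gf f ((n : ℤ) + 1 - z) with hY
  have hcast : ((n + 1 : ℕ) : ℤ) = (n : ℤ) + 1 := by push_cast; ring
  have h1 : af f (n + 1) = gf f ((n : ℤ) + 1)
      + ∑ m ∈ Finset.Icc 1 n, (pentCoeff (m : ℤ) : ℂ) * Y (m : ℤ) := by
    rw [af_eq]
    have e0 : ∀ j ∈ Finset.Icc 1 (n + 1),
        (pentCoeff (((n + 1 : ℕ) : ℤ) - j) : ℂ) * ∑ d ∈ j.divisors, f d
          = (pentCoeff (((n + 1 : ℕ) : ℤ) - j) : ℂ) * gf f (j : ℤ) := by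
      intro j _
      rw [gf_natCast]
    rw [Finset.sum_congr rfl e0, split_eq (n + 1) (by omega) (fun j => gf f (j : ℤ))]
    simp only [Nat.add_sub_cancel]
    rw [hcast]
    congr 1
    apply Finset.sum_congr rfl
    intro m hm
    obtain ⟨hm1, hm2⟩ := Finset.mem_Icc.1 hm
    rw [hY]
    simp only []
    congr 2
    omega
  have h2 := pent_sum_eq n Y
  rw [h2] at h1
  rw [h1]
  have key : ∀ b ∈ ({1, -1} : Finset ℤ), ∀ k ∈ Finset.Icc 1 n,
      (if (k : ℤ) * (3 * k + b) ≤ 2 * n then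
          (-1 : ℂ) ^ (k + 1) * gf f ((n : ℤ) + 1 - (k : ℤ) * (3 * k + b) / 2)
        else 0)
      = -(if (k : ℤ) * (3 * k + b) ≤ 2 * n then
          (-1 : ℂ) ^ k * Y ((k : ℤ) * (3 * k + b) / 2) else 0) := by
    intro b _ k _
    split
    · rw [hY]
      simp only []
      rw [pow_succ]
      ring
    · simp
  have hD : (∑ b ∈ ({1, -1} : Finset ℤ), ∑ k ∈ Finset.Icc 1 n,
        if (k : ℤ) * (3 * k + b) ≤ 2 * n then
          (-1 : ℂ) ^ (k + 1) * gf f ((n : ℤ) + 1 - (k : ℤ) * (3 * k + b) / 2)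
        else 0)
      = -∑ b ∈ ({1, -1} : Finset ℤ), ∑ k ∈ Finset.Icc 1 n,
        if (k : ℤ) * (3 * k + b) ≤ 2 * n then
          (-1 : ℂ) ^ k * Y ((k : ℤ) * (3 * k + b) / 2) else 0 := by
    rw [← Finset.sum_neg_distrib]
    apply Finset.sum_congr rfl
    intro b hb
    rw [← Finset.sum_neg_distrib]
    exact Finset.sum_congr rfl (key b hb)
  rw [hD]
  ring
end

section
/- For all integers n ≥ 1 and 0 ≤ i ≤ n, the coefficient of q^i in the finite product (1−q)(1−q^2)⋯(1−q^n) equals (−1)^k if i = k(3k+1)/2 or i = k(3k−1)/2 for some integer k ≥ 0, and equals 0 otherwise. -/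
/-!
Euler's pentagonal number theorem (`coeff_prod_one_sub_X_pow_eventually_eq` in Mathlib) gives the
coefficients of `∏_{j ≥ 1} (1 - X ^ j)`. A factor `1 - X ^ j` with `j > n` is `1` modulo
`X ^ (n + 1)`, so the coefficients of degree `≤ n` of the product are already those of
`(1 - X) ⋯ (1 - X ^ n)`.
-/

namespace PowerSeries

variable {R : Type*} [CommRing R]

theorem coeff_mul_one_sub_X_pow_of_lt (f : R⟦X⟧) {i d : ℕ} (h : i < d) :
    coeff i (f * (1 - X ^ d)) = coeff i f := by
  simp [mul_sub, coeff_mul_X_pow', h.not_ge]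

theorem prod_range_one_sub_X_pow_eq_prod_Icc (m : ℕ) :
    ∏ j ∈ Finset.range m, (1 - X ^ (j + 1) : R⟦X⟧) = ∏ j ∈ Finset.Icc 1 m, (1 - X ^ j) := by
  rw [Finset.range_eq_Ico, Finset.prod_Ico_add' (fun j ↦ (1 - X ^ j : R⟦X⟧)), zero_add,
    Finset.Ico_add_one_right_eq_Icc]

theorem coeff_prod_Icc_one_sub_X_pow_of_le {i n m : ℕ} (hi : i ≤ n) (hm : n ≤ m) :
    coeff i (∏ j ∈ Finset.Icc 1 m, (1 - X ^ j : R⟦X⟧)) =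
      coeff i (∏ j ∈ Finset.Icc 1 n, (1 - X ^ j)) := by
  induction m, hm using Nat.le_induction with
  | base => rfl
  | succ m hm ih =>
    rw [Finset.prod_Icc_succ_top (by omega), coeff_mul_one_sub_X_pow_of_lt _ (by omega), ih]

theorem coeff_prod_Icc_one_sub_X_pow {i n : ℕ} (hi : i ≤ n) :
    coeff i (∏ j ∈ Finset.Icc 1 n, (1 - X ^ j : R⟦X⟧)) = coeff i (pentagonalSeries R) := by
  obtain ⟨m, hm, hn⟩ := ((Filter.tendsto_finset_range.eventually
    (coeff_prod_one_sub_X_pow_eventually_eq R i)).and (Filter.eventually_ge_atTop n)).exists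
  rw [← hm, prod_range_one_sub_X_pow_eq_prod_Icc, coeff_prod_Icc_one_sub_X_pow_of_le hi hn]

end PowerSeries

open PowerSeries

theorem eq_pentagonal_iff {i : ℕ} {k : ℤ} : i = pentagonal k ↔ 2 * (i : ℤ) = k * (3 * k - 1) := by
  have := two_mul_natCast_pentagonal k
  omega

theorem mem_range_pentagonal_iff {i : ℕ} : i ∈ Set.range pentagonal ↔
    ∃ k : ℕ, 2 * (i : ℤ) = k * (3 * k + 1) ∨ 2 * (i : ℤ) = k * (3 * k - 1) := by
  constructor
  · rintro ⟨k, rfl⟩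
    rcases Int.eq_nat_or_neg k with ⟨k, rfl | rfl⟩
    · exact ⟨k, .inr (two_mul_natCast_pentagonal k)⟩
    · exact ⟨k, .inl (two_mul_natCast_pentagonal_neg k)⟩
  · rintro ⟨k, hk | hk⟩
    · exact ⟨-k, (eq_pentagonal_iff.2 (by linear_combination hk)).symm⟩
    · exact ⟨k, (eq_pentagonal_iff.2 hk).symm⟩

theorem statement4_general (n i : ℕ) (hi : i ≤ n) :
    (∀ k : ℕ, (2 * (i : ℤ) = (k : ℤ) * (3 * k + 1) ∨ 2 * (i : ℤ) = (k : ℤ) * (3 * k - 1)) →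
      PowerSeries.coeff (R := ℤ) i (∏ j ∈ Finset.Icc 1 n, (1 - (PowerSeries.X : PowerSeries ℤ) ^ j)) =
        (-1 : ℤ) ^ k) ∧
    ((¬ ∃ k : ℕ, 2 * (i : ℤ) = (k : ℤ) * (3 * k + 1) ∨ 2 * (i : ℤ) = (k : ℤ) * (3 * k - 1)) →
      PowerSeries.coeff (R := ℤ) i (∏ j ∈ Finset.Icc 1 n, (1 - (PowerSeries.X : PowerSeries ℤ) ^ j)) =
        0) := by
  rw [coeff_prod_Icc_one_sub_X_pow hi]
  refine ⟨fun k hk ↦ ?_,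
    fun hk ↦ coeff_pentagonalSeries_eq_zero ℤ (mt mem_range_pentagonal_iff.1 hk)⟩
  rcases hk with hk | hk
  · rw [eq_pentagonal_iff (i := i) (k := -k) |>.2 (by linear_combination hk),
      coeff_pentagonalSeries_pentagonal, Int.negOnePow_neg, Int.coe_negOnePow ℤ, Int.natAbs_natCast]
  · rw [eq_pentagonal_iff.2 hk, coeff_pentagonalSeries_pentagonal, Int.coe_negOnePow ℤ,
      Int.natAbs_natCast]

theorem statement4 (n i : ℕ) (hn : 1 ≤ n) (hi : i ≤ n) :
    (∀ k : ℕ, (2 * (i : ℤ) = (k : ℤ) * (3 * k + 1) ∨ 2 * (i : ℤ) = (k : ℤ) * (3 * k - 1)) →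
      PowerSeries.coeff (R := ℤ) i (∏ j ∈ Finset.Icc 1 n, (1 - (PowerSeries.X : PowerSeries ℤ) ^ j)) =
        (-1 : ℤ) ^ k) ∧
    ((¬ ∃ k : ℕ, 2 * (i : ℤ) = (k : ℤ) * (3 * k + 1) ∨ 2 * (i : ℤ) = (k : ℤ) * (3 * k - 1)) →
      PowerSeries.coeff (R := ℤ) i (∏ j ∈ Finset.Icc 1 n, (1 - (PowerSeries.X : PowerSeries ℤ) ^ j)) =
        0) :=
  statement4_general n i hi
end

section
/- Let f : ℤ⁺ → ℂ be an arbitrary arithmetic function. As an identity of formal power series in q, (∏_{j≥1}(1−q^j)) · Σ_{n≥1} f(n) q^n/(1−q^n) = Σ_{n≥1} (Σ_{i=1}^{n} a_{n,i} f(i)) q^n; that is, the n-th coefficient of (q;q)_∞ · L_f(q) equals a_f(n) for every n ≥ 1. -/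
/-!
STATEMENT 5: As formal power series in `q`,
`(∏_{j ≥ 1} (1-q^j)) · ∑_{n ≥ 1} f(n) q^n/(1-q^n) = ∑_{n ≥ 1} (∑_{i=1}^n a_{n,i} f(i)) q^n`,
i.e. the `n`-th coefficient of `(q;q)_∞ · L_f(q)` equals `a_f(n)` for every `n ≥ 1`.

The infinite product `(q;q)_∞` is defined coefficientwise: the coefficient of `q^t`
stabilizes in the partial products `∏_{j=1}^N (1-q^j)` as soon as `N ≥ t`.  Likewise the
Lambert series `L_f(q) = ∑_{n ≥ 1} f(n) q^n/(1-q^n)` is defined coefficientwise through its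
partial sums, where `q^n/(1-q^n)` denotes the geometric series `∑_{s ≥ 1} q^{s n}`.
-/

open PowerSeries

/-- The formal power series `q^n/(1-q^n) = ∑_{s ≥ 1} q^{s n}` (for `n ≥ 1`). -/
noncomputable def lambertTerm (n : ℕ) : PowerSeries ℂ :=
  PowerSeries.mk fun t => if n ∣ t ∧ t ≠ 0 then 1 else 0

/-- The Lambert series `L_f(q) = ∑_{n ≥ 1} f(n) q^n/(1-q^n)`, defined coefficientwise
via its partial sums (the coefficient of `q^t` only involves terms with `n ≤ t`). -/
noncomputable def Lf (f : ℕ → ℂ) : PowerSeries ℂ :=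
  PowerSeries.mk fun t =>
    PowerSeries.coeff (R := ℂ) t (∑ n ∈ Finset.Icc 1 t, f n • lambertTerm n)

/-- The infinite product `(q;q)_∞ = ∏_{j ≥ 1} (1-q^j)`, defined coefficientwise via its
partial products (the coefficient of `q^t` stabilizes for `N ≥ t`). -/
noncomputable def pochInf : PowerSeries ℂ :=
  PowerSeries.mk fun t =>
    PowerSeries.coeff (R := ℂ) t (∏ j ∈ Finset.Icc 1 t, (1 - (PowerSeries.X : PowerSeries ℂ) ^ j))

/-!
By Euler's pentagonal number theorem (`PowerSeries.pentagonalSeries` in Mathlib) the coefficient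
of `q^m` in `(q;q)_∞` is `c(m)`. Modulo `q^(n+1)` the Lambert series is the finite sum
`∑_{i ≤ n} f(i) q^i/(1-q^i)`, and multiplying a series by `q^i/(1-q^i) = q^i + q^(2i) + ⋯`
makes its `n`-th coefficient the sum of the old coefficients at `n - i, n - 2i, …`; for
`(q;q)_∞` that sum is `a_{n,i}`.
-/

lemma two_mul_eq_iff_pentagonal_eq {m : ℕ} {j a : ℤ} (h : 2 * (pentagonal j : ℤ) = a) :
    2 * (m : ℤ) = a ↔ pentagonal j = m := by
  omega

lemma pentCoeff_natCast (m : ℕ) :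
    pentCoeff m = ∑ k ∈ Finset.range (m + 1),
      ((if pentagonal (-k) = m then (-1 : ℤ) ^ k else 0) +
        (if pentagonal k = m ∧ 1 ≤ k then (-1 : ℤ) ^ k else 0)) := by
  simp only [pentCoeff, Int.toNat_natCast,
    two_mul_eq_iff_pentagonal_eq (two_mul_natCast_pentagonal_neg _),
    two_mul_eq_iff_pentagonal_eq (two_mul_natCast_pentagonal _)]

lemma le_pentagonal_natCast (k : ℕ) : k ≤ pentagonal k := by
  have := two_mul_natCast_pentagonal k
  nlinarith

lemma le_pentagonal_neg_natCast (k : ℕ) : k ≤ pentagonal (-k) := by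
  have := two_mul_natCast_pentagonal_neg k
  nlinarith

lemma pentCoeff_pentagonal (j : ℤ) : pentCoeff (pentagonal j) = j.negOnePow := by
  rw [pentCoeff_natCast]
  rcases le_or_gt j 0 with hj | hj
  · lift -j to ℕ using by omega with k hk
    obtain rfl : j = -k := by omega
    rw [Finset.sum_eq_single_of_mem k
      (by simpa [Nat.lt_succ_iff] using le_pentagonal_neg_natCast k)]
    · simp [Int.negOnePow_neg, Int.coe_negOnePow_natCast]
    · intro k' _ hk'
      simp only [pentagonal_inj]
      rw [if_neg (by omega), if_neg (by omega), add_zero]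
  · lift j to ℕ using hj.le with k
    rw [Finset.sum_eq_single_of_mem k (by simpa [Nat.lt_succ_iff] using le_pentagonal_natCast k)]
    · simp only [pentagonal_inj]
      rw [if_neg (by omega), if_pos ⟨trivial, by omega⟩, zero_add, Int.coe_negOnePow_natCast]
    · intro k' _ hk'
      simp only [pentagonal_inj]
      rw [if_neg (by omega), if_neg (by omega), add_zero]

lemma pentCoeff_eq_zero {m : ℕ} (h : m ∉ Set.range pentagonal) : pentCoeff m = 0 := by
  rw [pentCoeff_natCast]
  refine Finset.sum_eq_zero fun k _ => ?_
  rw [if_neg fun hk => h ⟨_, hk⟩, if_neg fun hk => h ⟨_, hk.1⟩, add_zero]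

lemma coeff_pentagonalSeries_eq_pentCoeff (R : Type*) [CommRing R] (m : ℕ) :
    coeff m (pentagonalSeries R) = pentCoeff m := by
  by_cases h : m ∈ Set.range pentagonal
  · obtain ⟨j, rfl⟩ := h
    rw [coeff_pentagonalSeries_pentagonal, pentCoeff_pentagonal]
  · rw [coeff_pentagonalSeries_eq_zero R h, pentCoeff_eq_zero h, Int.cast_zero]

section Truncation

variable {R : Type*} [CommRing R]

lemma coeff_mul_eq_of_X_pow_dvd_sub {φ ψ χ : R⟦X⟧} {t : ℕ} (h : X ^ (t + 1) ∣ ψ - χ) :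
    coeff t (φ * ψ) = coeff t (φ * χ) := by
  obtain ⟨c, hc⟩ := h
  rw [eq_add_of_sub_eq hc, mul_add, map_add, mul_left_comm, coeff_X_pow_mul', if_neg (by omega),
    zero_add]

lemma X_pow_dvd_prod_one_sub_X_pow_sub_one {s : Finset ℕ} {t : ℕ} (hs : ∀ n ∈ s, t ≤ n) :
    X ^ (t + 1) ∣ ∏ n ∈ s, (1 - X ^ (n + 1) : R⟦X⟧) - 1 := by
  refine Finset.prod_induction _ (fun ψ => X ^ (t + 1) ∣ ψ - 1) (fun a b ha hb => ?_) (by simp)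
    fun n hn => ?_
  · rw [show a * b - 1 = a * (b - 1) + (a - 1) by ring]
    exact dvd_add (dvd_mul_of_dvd_right hb a) ha
  · simpa using pow_dvd_pow X (Nat.succ_le_succ (hs n hn))

end Truncation

lemma coeff_pochInf (t : ℕ) : coeff t pochInf = coeff t (pentagonalSeries ℂ) := by
  obtain ⟨s₀, hs₀⟩ :=
    Filter.eventually_atTop.1 (coeff_prod_one_sub_X_pow_eventually_eq ℂ t)
  have hsub : Finset.range t ⊆ s₀ ∪ Finset.range t := Finset.subset_union_right
  -- the factors `1 - X ^ (n + 1)` with `n ≥ t` do not affect the coefficient of `X ^ t`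
  rw [← hs₀ _ Finset.subset_union_left, ← Finset.prod_sdiff hsub, mul_comm,
    coeff_mul_eq_of_X_pow_dvd_sub (χ := 1), mul_one, pochInf, coeff_mk, Finset.range_eq_Ico,
    Finset.prod_Ico_add' (fun j => (1 - X ^ j : ℂ⟦X⟧)), zero_add,
    Finset.Ico_add_one_right_eq_Icc]
  refine X_pow_dvd_prod_one_sub_X_pow_sub_one fun n hn => ?_
  simp only [Finset.mem_sdiff, Finset.mem_range] at hn
  omega

lemma coeff_lambertTerm (i t : ℕ) :
    coeff t (lambertTerm i) = if i ∣ t ∧ t ≠ 0 then 1 else 0 :=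
  coeff_mk _ _

lemma coeff_lambertTerm_of_lt {i t : ℕ} (h : t < i) : coeff t (lambertTerm i) = 0 := by
  rw [coeff_lambertTerm, if_neg fun ⟨hdvd, ht⟩ => h.not_ge (Nat.le_of_dvd (by omega) hdvd)]

lemma coeff_mul_lambertTerm (φ : ℂ⟦X⟧) {i : ℕ} (hi : 0 < i) (n : ℕ) :
    coeff n (φ * lambertTerm i) = ∑ s ∈ Finset.range (n / i), coeff (n - (s + 1) * i) φ := by
  rw [mul_comm, coeff_mul, Finset.Nat.sum_antidiagonal_eq_sum_range_succ
    (fun b a => coeff b (lambertTerm i) * coeff a φ)]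
  simp only [coeff_lambertTerm, ite_mul, one_mul, zero_mul, ← Finset.sum_filter]
  symm
  refine Finset.sum_bij (fun s _ => (s + 1) * i) (fun s hs => ?_)
    (fun s _ s' _ h => by simpa using Nat.eq_of_mul_eq_mul_right hi h) (fun b hb => ?_)
    fun _ _ => rfl
  · have : (s + 1) * i ≤ n := (Nat.le_div_iff_mul_le hi).1 (Finset.mem_range.1 hs)
    simp only [Finset.mem_filter, Finset.mem_range]
    exact ⟨by omega, dvd_mul_left i _, by positivity⟩
  · simp only [Finset.mem_filter, Finset.mem_range] at hb
    obtain ⟨hbn, ⟨c, rfl⟩, hb0⟩ := hb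
    have hc : 0 < c := Nat.pos_of_ne_zero (right_ne_zero_of_mul hb0)
    refine ⟨c - 1, Finset.mem_range.2 ?_, by rw [Nat.sub_add_cancel hc, mul_comm]⟩
    rw [Nat.lt_iff_add_one_le, Nat.le_div_iff_mul_le hi, Nat.sub_add_cancel hc, mul_comm]
    omega

lemma X_pow_dvd_Lf_sub (f : ℕ → ℂ) (n : ℕ) :
    X ^ (n + 1) ∣ Lf f - ∑ i ∈ Finset.Icc 1 n, f i • lambertTerm i := by
  refine X_pow_dvd_iff.2 fun t ht => ?_
  rw [map_sub, sub_eq_zero, Lf, coeff_mk, map_sum, map_sum]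
  refine Finset.sum_subset (Finset.Icc_subset_Icc_right (by omega)) fun i hi hit => ?_
  simp only [Finset.mem_Icc, not_and, not_le] at hi hit
  rw [coeff_smul, coeff_lambertTerm_of_lt (hit hi.1), smul_zero]

lemma coeff_pochInf_mul_lambertTerm {i : ℕ} (hi : 0 < i) (n : ℕ) :
    coeff n (pochInf * lambertTerm i) = aEnt n i := by
  rw [coeff_mul_lambertTerm _ hi, aEnt, Int.cast_sum]
  refine Finset.sum_congr rfl fun s hs => ?_
  rw [coeff_pochInf, coeff_pentagonalSeries_eq_pentCoeff,
    Nat.cast_sub ((Nat.le_div_iff_mul_le hi).1 (Finset.mem_range.1 hs))]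
  push_cast
  rfl

theorem statement5_general (f : ℕ → ℂ) (n : ℕ) :
    PowerSeries.coeff (R := ℂ) n (pochInf * Lf f) =
      ∑ i ∈ Finset.Icc 1 n, (aEnt n i : ℂ) * f i := by
  calc coeff n (pochInf * Lf f)
      = coeff n (pochInf * ∑ i ∈ Finset.Icc 1 n, f i • lambertTerm i) :=
        coeff_mul_eq_of_X_pow_dvd_sub (X_pow_dvd_Lf_sub f n)
    _ = ∑ i ∈ Finset.Icc 1 n, f i * coeff n (pochInf * lambertTerm i) := by
        simp only [Finset.mul_sum, mul_smul_comm, map_sum, coeff_smul, smul_eq_mul]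
    _ = ∑ i ∈ Finset.Icc 1 n, (aEnt n i : ℂ) * f i := by
        refine Finset.sum_congr rfl fun i hi => ?_
        rw [coeff_pochInf_mul_lambertTerm (Finset.mem_Icc.1 hi).1, mul_comm]

theorem statement5 (f : ℕ → ℂ) (n : ℕ) (hn : 1 ≤ n) :
    PowerSeries.coeff (R := ℂ) n (pochInf * Lf f) =
      ∑ i ∈ Finset.Icc 1 n, (aEnt n i : ℂ) * f i :=
  statement5_general f n
end

section
/- For every n ≥ 1, Euler's totient function satisfies φ(n) = Σ_{k=1}^{n} (Σ_{d|n} p(d−k) μ(n/d)) · B_{k−1}(φ), where for m ≥ 0, B_m(φ) := m+1 − Σ_{b∈{1,−1}} Σ_{k=1}^{⌊(√(24m+1)−b)/6⌋} (−1)^{k+1} (m+1−k(3k+b)/2). -/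
/-!
Let `P = ∑ p(n) Xⁿ = ∏ (1 - Xᵏ)⁻¹`. By Euler's pentagonal number theorem, `B_m(φ)` is the
coefficient of `Xᵐ` in `∏ (1 - Xᵏ) / (1 - X)²`, the term `m + 1` coming from the pentagonal
number `0`. Hence `∑_k p(d - k) B_{k-1}(φ)`, the coefficient of `X^{d-1}` in `1 / (1 - X)²`,
equals `d`, and summing against `μ(n / d)` gives `φ(n)` by Möbius inversion of
`∑_{d ∣ n} φ(d) = n`.
-/

open ArithmeticFunction

/-- Euler's partition function `p(n)` (number of partitions of `n`), for `n ≥ 0`. -/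
def partitionFun (n : ℕ) : ℕ := Fintype.card (Nat.Partition n)

/-- `B_m(φ) := m+1 - ∑_{b = ±1} ∑_{k ≥ 1, k(3k+b)/2 ≤ m} (-1)^(k+1) (m+1-k(3k+b)/2)`. -/
def Bphi (m : ℕ) : ℤ :=
  ((m : ℤ) + 1) -
    ∑ b ∈ ({1, -1} : Finset ℤ), ∑ k ∈ Finset.Icc 1 m,
      if (k : ℤ) * (3 * k + b) ≤ 2 * m then
        (-1 : ℤ) ^ (k + 1) * ((m : ℤ) + 1 - (k : ℤ) * (3 * k + b) / 2)
      else 0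

open PowerSeries PowerSeries.WithPiTopology Finset

theorem mk_partitionFun_mul_pentagonalSeries (R : Type*) [CommRing R] :
    PowerSeries.mk (fun n ↦ (partitionFun n : R)) * pentagonalSeries R = 1 := by
  -- the identity is algebraic: any Hausdorff topology on `R` lets us use infinite products
  let _ : TopologicalSpace R := ⊥
  have _ : DiscreteTopology R := ⟨rfl⟩
  have hP := Nat.Partition.hasProd_powerSeriesMk_card_restricted R (fun _ ↦ True)
  have hgeom (i : ℕ) : (∑' j : ℕ, (X : R⟦X⟧) ^ ((i + 1) * j)) * (1 - X ^ (i + 1)) = 1 := by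
    simp_rw [pow_mul]
    exact tsum_pow_mul_one_sub_of_constantCoeff_eq_zero (by simp)
  have h := hP.mul (hasProd_one_sub_X_pow R)
  simp only [if_true, hgeom] at h
  convert h.unique hasProd_one using 3 with n
  simp [Nat.Partition.restricted, partitionFun]

theorem natAbs_le_pentagonal (k : ℤ) : k.natAbs ≤ pentagonal k := by
  have h := two_mul_natCast_pentagonal k
  zify
  rcases le_total 0 k with hk | hk
  · rw [abs_of_nonneg hk]; nlinarith
  · rw [abs_of_nonpos hk]; nlinarith

theorem coeff_pentagonalSeries_mul {R : Type*} [CommRing R] (f : R⟦X⟧) (m : ℕ) :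
    coeff m (pentagonalSeries R * f) = ∑ k ∈ range (m + 1),
      (-1) ^ k * (coeff m (X ^ pentagonal (-k) * f) - coeff m (X ^ pentagonal (k + 1) * f)) := by
  let _ : TopologicalSpace R := ⊥
  have _ : DiscreteTopology R := ⟨rfl⟩
  have h := ((hasSum_pow_pentagonal_sub_pentagonalSeries R).mul_right f).map (coeff m)
    (continuous_coeff R m)
  simp only [Function.comp_def, mul_assoc, ← map_one C, ← map_neg, ← map_pow, coeff_C_mul,
    sub_mul, map_sub] at h
  refine h.unique (hasSum_sum_of_ne_finset_zero fun k hk ↦ ?_)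
  have hneg := natAbs_le_pentagonal (-k)
  have hsucc := natAbs_le_pentagonal (k + 1)
  simp only [mem_range, Int.natAbs_neg, Int.natAbs_natCast] at hk hneg hsucc
  rw [coeff_X_pow_mul', coeff_X_pow_mul', if_neg (by omega), if_neg (by omega)]
  simp

theorem coeff_X_pow_mul_mk_add_one (a m : ℕ) :
    coeff m (X ^ a * PowerSeries.mk fun i ↦ (i : ℤ) + 1) =
      if a ≤ m then (m : ℤ) + 1 - a else 0 := by
  rw [coeff_X_pow_mul', coeff_mk]
  split_ifs with h
  · push_cast [h]; ring
  · rfl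

theorem Bphi_summand_eq {m k P : ℕ} {b : ℤ} (hP : (k : ℤ) * (3 * k + b) = 2 * P) :
    (if (k : ℤ) * (3 * k + b) ≤ 2 * m then
        (-1 : ℤ) ^ (k + 1) * ((m : ℤ) + 1 - (k : ℤ) * (3 * k + b) / 2) else 0) =
      -((-1) ^ k * coeff m (X ^ P * PowerSeries.mk fun i ↦ (i : ℤ) + 1)) := by
  rw [coeff_X_pow_mul_mk_add_one, hP, Int.mul_ediv_cancel_left _ two_ne_zero]
  split_ifs <;> first | omega | ring

theorem sum_Icc_one_eq_sum_range {M : Type*} [AddCommMonoid M] (f : ℕ → M) (n : ℕ) :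
    ∑ k ∈ Icc 1 n, f k = ∑ k ∈ range n, f (k + 1) := by
  rw [← Ico_add_one_right_eq_Icc, sum_Ico_eq_sum_range]
  simp [add_comm]

theorem mk_Bphi :
    PowerSeries.mk Bphi = pentagonalSeries ℤ * PowerSeries.mk fun i ↦ (i : ℤ) + 1 := by
  ext m
  have hfirst :
      coeff m ((X : ℤ⟦X⟧) ^ pentagonal (-(0 : ℕ)) * PowerSeries.mk fun i ↦ (i : ℤ) + 1) =
        m + 1 := by
    simp [pentagonal]
  have hlast :
      coeff m ((X : ℤ⟦X⟧) ^ pentagonal (m + 1) * PowerSeries.mk fun i ↦ (i : ℤ) + 1) = 0 := by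
    have := natAbs_le_pentagonal (m + 1)
    rw [coeff_X_pow_mul_mk_add_one, if_neg (by omega)]
  have hplus (k : ℕ) : (k : ℤ) * (3 * k + 1) = 2 * pentagonal (-k) := by
    rw [two_mul_natCast_pentagonal_neg]
  have hminus (k : ℕ) : (k : ℤ) * (3 * k + -1) = 2 * pentagonal k := by
    rw [two_mul_natCast_pentagonal]; ring
  rw [coeff_mk, coeff_pentagonalSeries_mul, Bphi, sum_pair (by norm_num),
    sum_congr rfl fun k _ ↦ Bphi_summand_eq (hplus k),
    sum_congr rfl fun k _ ↦ Bphi_summand_eq (hminus k),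
    sum_Icc_one_eq_sum_range, sum_Icc_one_eq_sum_range]
  simp only [mul_sub, sum_sub_distrib]
  rw [sum_range_succ', sum_range_succ, hfirst, hlast]
  push_cast
  simp only [pow_succ, mul_neg_one, neg_mul, sum_neg_distrib]
  ring

theorem sum_partitionFun_mul_Bphi (d : ℕ) :
    ∑ k ∈ Icc 1 d, (partitionFun (d - k) : ℤ) * Bphi (k - 1) = d := by
  have hseries : PowerSeries.mk Bphi * PowerSeries.mk (fun n ↦ (partitionFun n : ℤ)) =
      PowerSeries.mk fun i ↦ (i : ℤ) + 1 := by
    rw [mk_Bphi, mul_right_comm, mul_comm (pentagonalSeries ℤ),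
      mk_partitionFun_mul_pentagonalSeries, one_mul]
  cases d with
  | zero => simp
  | succ e =>
    have h := congrArg (coeff e) hseries
    rw [coeff_mul, Finset.Nat.sum_antidiagonal_eq_sum_range_succ_mk] at h
    simp only [coeff_mk] at h
    rw [sum_Icc_one_eq_sum_range]
    simp only [Nat.add_sub_add_right, Nat.add_sub_cancel, mul_comm (partitionFun _ : ℤ)]
    push_cast
    exact h

theorem sum_divisors_moebius_mul_self (n : ℕ) :
    ∑ d ∈ n.divisors, moebius (n / d) * (d : ℤ) = Nat.totient n := by
  rcases Nat.eq_zero_or_pos n with rfl | hn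
  · simp
  have hinv := sum_eq_iff_sum_mul_moebius_eq (R := ℤ)
    (f := fun i ↦ (Nat.totient i : ℤ)) (g := fun i ↦ (i : ℤ)) |>.mp
    (fun m _ ↦ by exact_mod_cast Nat.sum_totient m) n hn
  simp only [Int.cast_id] at hinv
  rwa [Nat.sum_divisorsAntidiagonal' (f := fun a b ↦ moebius a * (b : ℤ))] at hinv

theorem statement12_general (n : ℕ) :
    (Nat.totient n : ℤ) = ∑ k ∈ Finset.Icc 1 n,
      (∑ d ∈ n.divisors,
          (if k ≤ d then (partitionFun (d - k) : ℤ) else 0) * moebius (n / d)) *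
        Bphi (k - 1) := by
  calc (Nat.totient n : ℤ)
      = ∑ d ∈ n.divisors, (moebius (n / d) : ℤ) * d := (sum_divisors_moebius_mul_self n).symm
    _ = ∑ d ∈ n.divisors, (moebius (n / d) : ℤ) *
          ∑ k ∈ Icc 1 n, if k ≤ d then (partitionFun (d - k) : ℤ) * Bphi (k - 1) else 0 := by
      refine sum_congr rfl fun d hd ↦ ?_
      have hdn := Nat.divisor_le hd
      rw [← sum_filter, ← sum_partitionFun_mul_Bphi d]
      congr 2
      ext k
      simp only [mem_filter, mem_Icc]
      omega
    _ = _ := by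
      simp only [sum_mul, mul_sum]
      rw [sum_comm]
      refine sum_congr rfl fun k _ ↦ sum_congr rfl fun d _ ↦ ?_
      split_ifs <;> ring

theorem statement12 (n : ℕ) (hn : 1 ≤ n) :
    (Nat.totient n : ℤ) = ∑ k ∈ Finset.Icc 1 n,
      (∑ d ∈ n.divisors,
          (if k ≤ d then (partitionFun (d - k) : ℤ) else 0) * moebius (n / d)) *
        Bphi (k - 1) :=
  statement12_general n
end

section
/- Let g(m) := m for m ≥ 1 and g(m) := 0 for m ≤ 0, and for m ≥ 0 set B_{g,m} := g(m+1) − Σ_{b∈{1,−1}} Σ_{k=1}^{⌊(√(24m+1)−b)/6⌋} (−1)^{k+1} g(m+1−k(3k+b)/2). Then for every m ≥ 0, with u₁ := ⌊(√(24m+1)+1)/6⌋ and u₂ := ⌊(√(24m+1)−1)/6⌋, one has B_{g,m} = m+1 − (1/8)·(8 − 5·(−1)^{u₁} − 4(−2+(−1)^{u₁}+(−1)^{u₂})m + 2(−1)^{u₁} u₁(3u₁+2) + (−1)^{u₂}(6u₂²+8u₂−3)). -/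
/-- `g(m) := m` for `m ≥ 1` and `g(m) := 0` for `m ≤ 0` (valued in `ℚ`). -/
def gId (m : ℤ) : ℚ := if 1 ≤ m then (m : ℚ) else 0

/-- `B_{g,m}` for `g = gId`. -/
def BgId (m : ℕ) : ℚ :=
  gId ((m : ℤ) + 1) -
    ∑ b ∈ ({1, -1} : Finset ℤ), ∑ k ∈ Finset.Icc 1 m,
      if (k : ℤ) * (3 * k + b) ≤ 2 * m then
        (-1 : ℚ) ^ (k + 1) * gId ((m : ℤ) + 1 - (k : ℤ) * (3 * k + b) / 2)
      else 0

lemma even_aux (k b : ℤ) (hb : Odd b) : 2 ∣ k * (3 * k + b) := by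
  rcases Int.even_or_odd k with h | h
  · exact Dvd.dvd.mul_right h.two_dvd _
  · obtain ⟨j, rfl⟩ := h
    obtain ⟨i, rfl⟩ := hb
    exact ⟨(2 * j + 1) * (3 * j + i + 2), by ring⟩

lemma floor_aux (m n : ℕ) (c : ℤ) (hc : c = 1 ∨ c = -1)
    (h1 : (n : ℤ) * (3 * n - c) ≤ 2 * m)
    (h2 : (2 * m : ℤ) < ((n : ℤ) + 1) * (3 * n + 3 - c)) :
    ⌊(Real.sqrt (24 * m + 1) + c) / 6⌋ = n := by
  have hD : (0:ℝ) ≤ 24 * m + 1 := by positivity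
  rw [Int.floor_eq_iff]
  constructor
  · rw [le_div_iff₀ (by norm_num)]
    have hle : ((6 * n - c : ℤ) : ℝ) ≤ Real.sqrt (24 * m + 1) := by
      rcases le_or_gt ((6 * n - c : ℤ) : ℝ) 0 with h | h
      · exact h.trans (Real.sqrt_nonneg _)
      · rw [Real.le_sqrt' h]
        have : ((6 * n - c : ℤ) : ℝ) ^ 2 ≤ ((24 * m + 1 : ℤ) : ℝ) := by
          rw [← Int.cast_pow, Int.cast_le]
          rcases hc with rfl | rfl <;> nlinarith [h1]
        simpa using this
    push_cast at hle ⊢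
    linarith
  · rw [div_lt_iff₀ (by norm_num)]
    have hlt : Real.sqrt (24 * m + 1) < ((6 * n + 6 - c : ℤ) : ℝ) := by
      have hpos : (0:ℝ) < ((6 * n + 6 - c : ℤ) : ℝ) := by
        rw [Int.cast_pos]; rcases hc with rfl | rfl <;> omega
      rw [Real.sqrt_lt' hpos]
      have : ((24 * m + 1 : ℤ) : ℝ) < ((6 * n + 6 - c : ℤ) : ℝ) ^ 2 := by
        rw [← Int.cast_pow, Int.cast_lt]
        rcases hc with rfl | rfl <;> nlinarith [h2]
      simpa using this
    push_cast at hlt ⊢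
    linarith

/-- closed form for the partial alternating sum. -/
lemma sum_closed (b : ℤ) (c : ℚ) (u : ℕ) :
    ∑ k ∈ Finset.Icc 1 u, (-1 : ℚ) ^ (k + 1) * (c - (k : ℚ) * (3 * k + b) / 2)
      = c * (1 - (-1 : ℚ) ^ u) / 2 + (3 / 4) * (-1 : ℚ) ^ u * u * (u + 1)
        - (b : ℚ) * (1 - (-1 : ℚ) ^ u * (2 * u + 1)) / 8 := by
  induction u with
  | zero => simp
  | succ n ih =>
    rw [Finset.sum_Icc_succ_top (by omega), ih]
    push_cast
    ring

set_option maxHeartbeats 1000000 in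
theorem statement15 (m : ℕ) :
    BgId m =
      (m : ℚ) + 1 -
        (1 / 8) *
          (8 - 5 * (-1 : ℚ) ^ (⌊(Real.sqrt (24 * m + 1) + 1) / 6⌋)
            - 4 * (-2 + (-1 : ℚ) ^ (⌊(Real.sqrt (24 * m + 1) + 1) / 6⌋)
                    + (-1 : ℚ) ^ (⌊(Real.sqrt (24 * m + 1) - 1) / 6⌋)) * m
            + 2 * (-1 : ℚ) ^ (⌊(Real.sqrt (24 * m + 1) + 1) / 6⌋) *
                (⌊(Real.sqrt (24 * m + 1) + 1) / 6⌋ : ℚ) *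
                (3 * (⌊(Real.sqrt (24 * m + 1) + 1) / 6⌋ : ℚ) + 2)
            + (-1 : ℚ) ^ (⌊(Real.sqrt (24 * m + 1) - 1) / 6⌋) *
                (6 * (⌊(Real.sqrt (24 * m + 1) - 1) / 6⌋ : ℚ) ^ 2
                  + 8 * (⌊(Real.sqrt (24 * m + 1) - 1) / 6⌋ : ℚ) - 3)) := by
  classical
  set P₁ : ℕ → Prop := fun n => 3 * (n * n) ≤ 2 * m + n with hP₁
  set P₂ : ℕ → Prop := fun n => 3 * (n * n) + n ≤ 2 * m with hP₂
  set n₁ := Nat.findGreatest P₁ m with hn₁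
  set n₂ := Nat.findGreatest P₂ m with hn₂
  have hn₁le : n₁ ≤ m := Nat.findGreatest_le m
  have hn₂le : n₂ ≤ m := Nat.findGreatest_le m
  have h₁spec : P₁ n₁ := Nat.findGreatest_spec (Nat.zero_le m) (by simp [hP₁])
  have h₂spec : P₂ n₂ := Nat.findGreatest_spec (Nat.zero_le m) (by simp [hP₂])
  have h₁not : ¬ P₁ (n₁ + 1) := by
    rcases Nat.lt_or_ge n₁ m with h | h
    · exact Nat.findGreatest_is_greatest (n := m) (by omega) (by omega)
    · have he : n₁ = m := le_antisymm hn₁le h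
      rw [he, hP₁]; simp only [not_le]; nlinarith
  have h₂not : ¬ P₂ (n₂ + 1) := by
    rcases Nat.lt_or_ge n₂ m with h | h
    · exact Nat.findGreatest_is_greatest (n := m) (by omega) (by omega)
    · have he : n₂ = m := le_antisymm hn₂le h
      rw [he, hP₂]; simp only [not_le]; nlinarith
  rw [hP₁] at h₁spec h₁not; rw [hP₂] at h₂spec h₂not
  simp only [not_le] at h₁not h₂not
  -- integer versions
  have z₁spec : (n₁ : ℤ) * (3 * n₁ - 1) ≤ 2 * m := by push_cast [← @Nat.cast_le ℤ] at h₁spec ⊢; nlinarith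
  have z₂spec : (n₂ : ℤ) * (3 * n₂ + 1) ≤ 2 * m := by push_cast [← @Nat.cast_le ℤ] at h₂spec ⊢; nlinarith
  have z₁not : (2 * m : ℤ) < ((n₁ : ℤ) + 1) * (3 * n₁ + 3 - 1) := by
    push_cast [← @Nat.cast_lt ℤ] at h₁not ⊢; nlinarith
  have z₂not : (2 * m : ℤ) < ((n₂ : ℤ) + 1) * (3 * n₂ + 3 + 1) := by
    push_cast [← @Nat.cast_lt ℤ] at h₂not ⊢; nlinarith
  -- identify the floors
  have hf₁ : ⌊(Real.sqrt (24 * m + 1) + 1) / 6⌋ = (n₁ : ℤ) := by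
    have := floor_aux m n₁ 1 (Or.inl rfl) z₁spec (by linarith)
    rw [← this]; norm_num
  have hf₂ : ⌊(Real.sqrt (24 * m + 1) - 1) / 6⌋ = (n₂ : ℤ) := by
    have := floor_aux m n₂ (-1) (Or.inr rfl) (by push_cast; nlinarith [z₂spec])
      (by push_cast; nlinarith [z₂not])
    simpa [sub_eq_add_neg] using this
  -- rewrite the inner sums
  have key : ∀ b : ℤ, b = 1 ∨ b = -1 → ∀ u : ℕ, u ≤ m →
      ((u : ℤ) * (3 * u + b) ≤ 2 * m) →
      (2 * (m : ℤ) < ((u : ℤ) + 1) * (3 * (u + 1) + b)) →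
      (∑ k ∈ Finset.Icc 1 m,
        if (k : ℤ) * (3 * k + b) ≤ 2 * m then
          (-1 : ℚ) ^ (k + 1) * gId ((m : ℤ) + 1 - (k : ℤ) * (3 * k + b) / 2)
        else 0)
      = ∑ k ∈ Finset.Icc 1 u, (-1 : ℚ) ^ (k + 1) * (((m : ℚ) + 1) - (k : ℚ) * (3 * k + b) / 2) := by
    intro b hb u hum hu hnu
    have hbodd : Odd b := by rcases hb with rfl | rfl <;> decide
    have hbge : (-1 : ℤ) ≤ b := by rcases hb with rfl | rfl <;> norm_num
    rw [← Finset.sum_subset (Finset.Icc_subset_Icc_right hum)]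
    · apply Finset.sum_congr rfl
      intro k hk
      simp only [Finset.mem_Icc] at hk
      have hkb : (k : ℤ) * (3 * k + b) ≤ 2 * m := by
        have h1 : (1:ℤ) ≤ k := by exact_mod_cast hk.1
        have h2 : (k:ℤ) ≤ u := by exact_mod_cast hk.2
        have hprod : (0:ℤ) ≤ ((u:ℤ) - k) * (3 * ((u:ℤ) + k) + b) :=
          mul_nonneg (by linarith) (by linarith)
        nlinarith [hprod, hu]
      rw [if_pos hkb]
      have hdvd : (2:ℤ) ∣ (k : ℤ) * (3 * k + b) := even_aux _ _ hbodd
      have harg : 1 ≤ (m : ℤ) + 1 - (k : ℤ) * (3 * k + b) / 2 := by omega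
      rw [gId, if_pos harg]
      congr 1
      push_cast [Int.cast_div_charZero hdvd]
      ring
    · intro k hk hnk
      simp only [Finset.mem_Icc] at hk hnk
      have hku : u < k := by omega
      have : 2 * (m:ℤ) < (k : ℤ) * (3 * k + b) := by
        have h2 : (u:ℤ) + 1 ≤ k := by exact_mod_cast hku
        have hk1 : (1:ℤ) ≤ k := by exact_mod_cast hk.1
        have hprod : (0:ℤ) ≤ ((k:ℤ) - (u + 1)) * (3 * ((k:ℤ) + u + 1) + b) :=
          mul_nonneg (by linarith) (by linarith)
        nlinarith [hprod, hnu]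
      rw [if_neg (by omega)]
  have keyA := key (-1) (Or.inr rfl) n₁ hn₁le (by push_cast; nlinarith [z₁spec])
    (by push_cast; nlinarith [z₁not])
  have keyB := key 1 (Or.inl rfl) n₂ hn₂le (by push_cast; nlinarith [z₂spec])
    (by push_cast; nlinarith [z₂not])
  rw [BgId, Finset.sum_pair (by norm_num : (1:ℤ) ≠ -1), keyA, keyB,
    sum_closed, sum_closed, hf₁, hf₂, gId, if_pos (by omega)]
  push_cast [zpow_natCast]
  ring
end
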